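/- Let 0 < α < 1, β > 0 and u ∈ ℝ. Then the function x ↦ (e^{iux} − 1) e^{−βx} x^{−1−α} is Lebesgue integrable on (0, ∞) and ∫_0^∞ (e^{iux} − 1) e^{−βx} x^{−1−α} dx = Γ(−α) [ (β − iu)^α − β^α ], where (β − iu)^α is the principal complex power and Γ(−α) = −Γ(1−α)/α. -/

import Mathlib

open MeasureTheory Set Filter Complex Topology

section CTSAux

lemma cts_norm_exp_I_mul_sub_one_le (θ : ℝ) : ‖Complex.exp (Complex.I * θ) - 1‖ ≤ |θ| := by
  have hre : (Complex.exp (Complex.I * θ) - 1).re = Real.cos θ - 1 := by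
    simp [Complex.exp_re]
  have him : (Complex.exp (Complex.I * θ) - 1).im = Real.sin θ := by
    simp [Complex.exp_im]
  have hsq : ‖Complex.exp (Complex.I * θ) - 1‖ ^ 2 ≤ θ ^ 2 := by
    rw [Complex.sq_norm, Complex.normSq_apply, hre, him]
    have h1 : Real.sin (θ / 2) ^ 2 ≤ (θ / 2) ^ 2 := Real.sin_sq_le_sq
    have h2 : Real.cos θ = 1 - 2 * Real.sin (θ / 2) ^ 2 := by
      have h4 := Real.cos_two_mul (θ / 2)
      have h3 := Real.sin_sq_add_cos_sq (θ / 2)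
      rw [show 2 * (θ / 2) = θ by ring] at h4
      nlinarith
    nlinarith [Real.sin_sq_add_cos_sq θ]
  calc ‖Complex.exp (Complex.I * θ) - 1‖ = Real.sqrt (‖Complex.exp (Complex.I * θ) - 1‖ ^ 2) :=
        (Real.sqrt_sq (norm_nonneg _)).symm
    _ ≤ Real.sqrt (θ ^ 2) := Real.sqrt_le_sqrt hsq
    _ = |θ| := Real.sqrt_sq_eq_abs θ

lemma cts_integrableOn_rpow_mul_exp {p c : ℝ} (hp : -1 < p) (hc : 0 < c) :
    IntegrableOn (fun x : ℝ => x ^ p * Real.exp (-(c * x))) (Ioi 0) := by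
  have h1 : IntegrableOn (fun x : ℝ => Real.exp (-x) * x ^ p) (Ioi 0) := by
    simpa using Real.GammaIntegral_convergent (by linarith : (0:ℝ) < p + 1)
  have h2 : IntegrableOn (fun x : ℝ => Real.exp (-(c * x)) * (c * x) ^ p) (Ioi 0) := by
    have := (integrableOn_Ioi_comp_mul_left_iff
      (fun x : ℝ => Real.exp (-x) * x ^ p) 0 hc).2 (by simpa using h1)
    simpa using this
  have h3 : IntegrableOn (fun x : ℝ => c ^ p * (x ^ p * Real.exp (-(c * x)))) (Ioi 0) := by
    apply h2.congr_fun ?_ measurableSet_Ioi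
    intro x hx
    simp only []
    rw [Real.mul_rpow hc.le (le_of_lt hx)]
    ring
  have hcp : (c : ℝ) ^ p ≠ 0 := (Real.rpow_pos_of_pos hc p).ne'
  have h4 := h3.const_mul ((c ^ p)⁻¹)
  have h5 : Integrable (fun x : ℝ => x ^ p * Real.exp (-(c * x))) (volume.restrict (Ioi 0)) := by
    simpa [← mul_assoc, inv_mul_cancel₀ hcp] using h4
  exact h5

lemma cts_integrableOn_rpow_mul_cexp {p : ℝ} {z : ℂ} (hp : -1 < p) (hz : 0 < z.re) :
    IntegrableOn (fun x : ℝ => ((x ^ p : ℝ) : ℂ) * Complex.exp (-(z * x))) (Ioi 0) := by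
  have hb := cts_integrableOn_rpow_mul_exp hp hz
  apply Integrable.mono' hb
  · apply AEStronglyMeasurable.mul
    · exact (Complex.measurable_ofReal.comp (by fun_prop : Measurable fun x : ℝ => x ^ p)).aestronglyMeasurable
    · exact (Continuous.aestronglyMeasurable (by fun_prop))
  · rw [ae_restrict_iff' measurableSet_Ioi]
    filter_upwards with x hx
    rw [norm_mul, Complex.norm_exp]
    have h1 : (-(z * x)).re = -(z.re * x) := by simp
    rw [h1, Complex.norm_real, Real.norm_eq_abs,
      _root_.abs_of_nonneg (Real.rpow_nonneg hx.le p)]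

lemma cts_parts {s : ℝ} {z : ℂ} (hs : 0 < s) (hz : 0 < z.re) :
    ∫ x in Ioi (0:ℝ), ((x ^ s : ℝ) : ℂ) * Complex.exp (-(z * x)) =
      (s / z) * ∫ x in Ioi (0:ℝ), ((x ^ (s - 1) : ℝ) : ℂ) * Complex.exp (-(z * x)) := by
  have hz0 : z ≠ 0 := fun h => hz.ne' (by simp [h])
  set g : ℝ → ℂ := fun x => -(((x ^ s : ℝ) : ℂ) * Complex.exp (-(z * x)) / z) with hg
  set g' : ℝ → ℂ := fun x =>
    ((x ^ s : ℝ) : ℂ) * Complex.exp (-(z * x))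
      - (s / z) * (((x ^ (s - 1) : ℝ) : ℂ) * Complex.exp (-(z * x))) with hg'
  have hint1 := cts_integrableOn_rpow_mul_cexp (p := s) (by linarith) hz
  have hint2 := cts_integrableOn_rpow_mul_cexp (p := s - 1) (by linarith) hz
  have hderiv : ∀ x ∈ Ioi (0:ℝ), HasDerivAt g (g' x) x := by
    intro x hx
    have hx0 : (0:ℝ) < x := hx
    have h1 : HasDerivAt (fun y : ℝ => ((y ^ s : ℝ) : ℂ)) ((s * x ^ (s - 1) : ℝ) : ℂ) x :=
      (Real.hasDerivAt_rpow_const (Or.inl hx0.ne')).ofReal_comp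
    have h2 : HasDerivAt (fun y : ℝ => Complex.exp (-(z * y))) (-z * Complex.exp (-(z * x))) x := by
      have h3 : HasDerivAt (fun y : ℝ => -(z * (y : ℂ))) (-z) x := by
        simpa using (show HasDerivAt (fun y : ℝ => -(z * (y : ℂ))) _ x from ((hasDerivAt_id x).ofReal_comp.const_mul z).neg)
      simpa [mul_comm] using h3.cexp
    have h4 := ((h1.mul h2).div_const z).neg
    refine h4.congr_deriv ?_
    symm
    push_cast
    rw [← neg_div, eq_div_iff hz0, sub_mul, mul_right_comm ((s:ℂ)/z) _ z,
      div_mul_cancel₀ _ hz0]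
    ring
  have hcont : ContinuousWithinAt g (Ici (0:ℝ)) 0 := by
    apply ContinuousAt.continuousWithinAt
    have c1 : ContinuousAt (fun x : ℝ => ((x ^ s : ℝ) : ℂ)) 0 :=
      Complex.continuous_ofReal.continuousAt.comp (Real.continuousAt_rpow_const 0 s (Or.inr hs.le))
    have c2 : Continuous fun x : ℝ => Complex.exp (-(z * x)) := by fun_prop
    exact ((c1.mul c2.continuousAt).div_const z).neg
  have htop : Tendsto g atTop (𝓝 0) := by
    apply squeeze_zero_norm' (a := fun x : ℝ => x ^ s * Real.exp (-(z.re * x)) / ‖z‖)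
    · filter_upwards [eventually_gt_atTop (0:ℝ)] with x hx
      simp only [hg, norm_neg, norm_div, norm_mul]
      rw [Complex.norm_exp]
      have h1 : (-(z * x)).re = -(z.re * x) := by simp
      rw [h1, Complex.norm_real, Real.norm_eq_abs,
        _root_.abs_of_nonneg (Real.rpow_nonneg hx.le s)]
    · have := (tendsto_rpow_mul_exp_neg_mul_atTop_nhds_zero s z.re hz).div_const ‖z‖
      simpa [neg_mul] using this
  have key := integral_Ioi_of_hasDerivAt_of_tendsto hcont hderiv (hint1.sub (hint2.const_mul _)) htop
  have hg0 : g 0 = 0 := by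
    simp [hg, Real.zero_rpow hs.ne']
  rw [hg0, sub_zero] at key
  have hsplit : ∫ x in Ioi (0:ℝ), g' x =
      (∫ x in Ioi (0:ℝ), ((x ^ s : ℝ) : ℂ) * Complex.exp (-(z * x)))
        - (s / z) * ∫ x in Ioi (0:ℝ), ((x ^ (s - 1) : ℝ) : ℂ) * Complex.exp (-(z * x)) := by
    rw [integral_sub hint1 (hint2.const_mul _), integral_const_mul]
  rw [hsplit] at key
  linear_combination key

lemma cts_gamma_integral {β : ℝ} (hβ : 0 < β) {s : ℝ} (hs : 0 < s) (u : ℝ) :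
    ∫ x in Ioi (0:ℝ), ((x ^ (s - 1) : ℝ) : ℂ) *
        Complex.exp (-(((β:ℂ) - Complex.I * u) * x)) =
      (Real.Gamma s : ℂ) * ((β:ℂ) - Complex.I * u) ^ (-(s:ℂ)) := by
  set z : ℝ → ℂ := fun v => (β:ℂ) - Complex.I * v with hzdef
  have hzre : ∀ v : ℝ, (z v).re = β := by intro v; simp [hzdef]
  have hz0 : ∀ v : ℝ, z v ≠ 0 := by
    intro v h
    have := hzre v
    rw [h] at this
    simp at this
    exact hβ.ne this
  have hzrepos : ∀ v : ℝ, 0 < (z v).re := fun v => by rw [hzre]; exact hβ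
  set F : ℝ → ℂ :=
    fun v => ∫ x in Ioi (0:ℝ), ((x ^ (s - 1) : ℝ) : ℂ) * Complex.exp (-(z v * x)) with hFdef
  have hs1 : (-1 : ℝ) < s - 1 := by linarith
  -- derivative of F
  have hFderiv : ∀ v : ℝ, HasDerivAt F (Complex.I * ((s / z v) * F v)) v := by
    intro v
    have key := hasDerivAt_integral_of_dominated_loc_of_deriv_le
      (F := fun (w : ℝ) (x : ℝ) => ((x ^ (s - 1) : ℝ) : ℂ) * Complex.exp (-(z w * x)))
      (F' := fun (w : ℝ) (x : ℝ) =>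
        ((x ^ (s - 1) : ℝ) : ℂ) * (Complex.I * x * Complex.exp (-(z w * x))))
      (bound := fun x : ℝ => x ^ (s - 1) * (x * Real.exp (-(β * x))))
      (μ := volume.restrict (Ioi 0)) (x₀ := v) Filter.univ_mem
      (Filter.Eventually.of_forall fun w =>
        (cts_integrableOn_rpow_mul_cexp hs1 (hzrepos w)).aestronglyMeasurable)
      (cts_integrableOn_rpow_mul_cexp hs1 (hzrepos v))
      (((Complex.measurable_ofReal.comp
          (by fun_prop : Measurable fun x : ℝ => x ^ (s - 1))).mul
        (by fun_prop : Measurable fun x : ℝ =>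
          Complex.I * x * Complex.exp (-(z v * x)))).aestronglyMeasurable)
      ?_ ?_ ?_
    · -- use the conclusion
      have hval : (∫ x in Ioi (0:ℝ),
            ((x ^ (s - 1) : ℝ) : ℂ) * (Complex.I * x * Complex.exp (-(z v * x)))) =
          Complex.I * ((s / z v) * F v) := by
        have hcg : ∀ x ∈ Ioi (0:ℝ),
            ((x ^ (s - 1) : ℝ) : ℂ) * (Complex.I * x * Complex.exp (-(z v * x))) =
              Complex.I * (((x ^ s : ℝ) : ℂ) * Complex.exp (-(z v * x))) := by
          intro x hx
          have hxs : (x : ℝ) ^ s = x ^ (s - 1) * x := by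
            rw [← Real.rpow_add_one (ne_of_gt hx) (s - 1)]
            norm_num
          rw [hxs]
          push_cast
          ring
        rw [setIntegral_congr_fun measurableSet_Ioi hcg, integral_const_mul,
          cts_parts hs (hzrepos v)]
      rw [hval] at key
      exact key.2
    · -- bound
      rw [ae_restrict_iff' measurableSet_Ioi]
      filter_upwards with x hx
      intro w _
      have h1 : (-(z w * x)).re = -(β * x) := by
        simp [hzdef, Complex.mul_re]
      rw [norm_mul, Complex.norm_real, Real.norm_eq_abs,
        _root_.abs_of_nonneg (Real.rpow_nonneg hx.le _), norm_mul, norm_mul,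
        Complex.norm_exp, h1]
      simp [_root_.abs_of_nonneg (mem_Ioi.mp hx).le]
    · -- bound integrable
      have := cts_integrableOn_rpow_mul_exp (by linarith : (-1:ℝ) < s) hβ
      apply this.congr_fun ?_ measurableSet_Ioi
      intro x hx
      simp only []
      rw [show (s : ℝ) = (s - 1) + 1 by ring, Real.rpow_add_one (ne_of_gt hx)]
      ring
    · -- differentiability in the parameter
      filter_upwards with x
      intro w _
      have h1 : HasDerivAt (fun w : ℝ => (Complex.I * x) * w - (β:ℂ) * x)
          (Complex.I * x) w := by
        simpa using
          (((hasDerivAt_id w).ofReal_comp.const_mul (Complex.I * (x:ℂ))).sub_const ((β:ℂ) * x))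
      have h2 : (fun w : ℝ => -(z w * x)) = fun w : ℝ => (Complex.I * x) * w - (β:ℂ) * x := by
        funext w
        simp only [hzdef]
        ring
      have h3 : HasDerivAt (fun w : ℝ => -(z w * x)) (Complex.I * x) w := h2 ▸ h1
      have h4 := h3.cexp.const_mul ((x ^ (s - 1) : ℝ) : ℂ)
      refine h4.congr_deriv ?_
      symm
      ring
  -- H is constant
  set H : ℝ → ℂ := fun v => F v * (z v) ^ (s:ℂ) with hHdef
  have hHderiv : ∀ v : ℝ, HasDerivAt H 0 v := by
    intro v
    have hzd : HasDerivAt z (-Complex.I) v := by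
      have h1 : HasDerivAt (fun w : ℝ => Complex.I * (w:ℂ)) Complex.I v := by
        simpa using ((hasDerivAt_id v).ofReal_comp.const_mul Complex.I)
      simpa [hzdef] using (show HasDerivAt (fun w : ℝ => (β:ℂ) - Complex.I * w) _ v from (hasDerivAt_const v ((β:ℂ))).sub h1)
    have hcp : HasDerivAt (fun w : ℝ => (z w) ^ (s:ℂ))
        ((s:ℂ) * (z v) ^ ((s:ℂ) - 1) * (-Complex.I)) v := by
      have hsp : z v ∈ Complex.slitPlane := Complex.mem_slitPlane_iff.2 (Or.inl (hzrepos v))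
      have hout := (Complex.hasStrictDerivAt_cpow_const (c := (s:ℂ)) hsp).hasDerivAt
      simpa [Function.comp] using (show HasDerivAt (fun w : ℝ => (z w) ^ (s:ℂ)) _ v from hout.comp v hzd)
    have hmul := (hFderiv v).mul hcp
    refine hmul.congr_deriv ?_
    symm
    have hpow : (z v) ^ (s:ℂ) = (z v) ^ ((s:ℂ) - 1) * z v := by
      rw [Complex.cpow_sub _ _ (hz0 v), Complex.cpow_one, div_mul_cancel₀ _ (hz0 v)]
    rw [hpow]
    linear_combination (-Complex.I * F v * (z v) ^ ((s:ℂ) - 1)) *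
      (div_mul_cancel₀ (s:ℂ) (hz0 v))
  have hconst : H u = H 0 :=
    is_const_of_deriv_eq_zero (fun x => (hHderiv x).differentiableAt)
      (fun x => (hHderiv x).deriv) u 0
  -- value at 0
  have hz0val : z 0 = (β : ℂ) := by simp [hzdef]
  have hF0 : F 0 = ((1 / β : ℝ) : ℂ) ^ (s:ℂ) * Complex.Gamma s := by
    simp only [hFdef]
    have hcg : ∀ x ∈ Ioi (0:ℝ),
        ((x ^ (s - 1) : ℝ) : ℂ) * Complex.exp (-(z 0 * x)) =
          (x : ℂ) ^ ((s:ℂ) - 1) * Complex.exp (-((β:ℝ) * x)) := by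
      intro x hx
      rw [Complex.ofReal_cpow hx.le]
      push_cast
      rw [hz0val]
    rw [setIntegral_congr_fun measurableSet_Ioi hcg,
      integral_cpow_mul_exp_neg_mul_Ioi (by simpa using hs) hβ]
    push_cast
    ring
  have hbb : ((1 / β : ℝ) : ℂ) ^ (s:ℂ) * ((β:ℝ):ℂ) ^ (s:ℂ) = 1 := by
    rw [← Complex.mul_cpow_ofReal_nonneg (by positivity) hβ.le,
      ← Complex.ofReal_mul, show (1 / β) * β = 1 by field_simp, Complex.ofReal_one,
      Complex.one_cpow]
  have hH0 : H 0 = (Real.Gamma s : ℂ) := by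
    simp only [hHdef]
    rw [hF0, hz0val, mul_right_comm, hbb, one_mul, Complex.Gamma_ofReal]
  have hne : (z u) ^ (s:ℂ) ≠ 0 := by
    rw [Ne, Complex.cpow_eq_zero_iff]
    simp [hz0 u]
  have h5 : F u * (z u) ^ (s:ℂ) = (Real.Gamma s : ℂ) := by
    rw [← hH0, ← hconst]
  have hfinal : F u = (Real.Gamma s : ℂ) * (z u) ^ (-(s:ℂ)) := by
    rw [Complex.cpow_neg]
    field_simp [hne]
    linear_combination h5
  simpa [hzdef, hFdef] using hfinal

end CTSAux

/-- Lemma 2.5 of Küchler–Tappe. For `0 < α < 1`, `β > 0` and `u ∈ ℝ`,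
the function `x ↦ (e^{iux} − 1) e^{−βx} x^{−1−α}` is Lebesgue integrable on `(0, ∞)` and
`∫_0^∞ (e^{iux} − 1) e^{−βx} x^{−1−α} dx = Γ(−α) [(β − iu)^α − β^α]`,
with `(β − iu)^α` the principal complex power. This is the characteristic exponent of
the classical tempered stable subordinator with Lévy density `e^{-βx} x^{-1-α}`. -/
theorem cts_characteristic_exponent
    (α β : ℝ) (hα0 : 0 < α) (hα1 : α < 1) (hβ : 0 < β) (u : ℝ) :
    IntegrableOn
        (fun x : ℝ =>
          (Complex.exp (Complex.I * u * x) - 1) *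
            ((Real.exp (-(β * x)) * x ^ (-1 - α) : ℝ) : ℂ)) (Ioi 0) volume ∧
      ∫ x in Ioi (0 : ℝ),
          (Complex.exp (Complex.I * u * x) - 1) *
            ((Real.exp (-(β * x)) * x ^ (-1 - α) : ℝ) : ℂ) =
        (Real.Gamma (-α) : ℂ) *
          (((β : ℂ) - Complex.I * u) ^ (α : ℂ) - ((β : ℝ) : ℂ) ^ (α : ℂ)) := by
  have hαC : ((α : ℝ) : ℂ) ≠ 0 := by exact_mod_cast hα0.ne'
  have hzrepos : (0:ℝ) < ((β:ℂ) - Complex.I * u).re := by simp [hβ]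
  have hβrepos : (0:ℝ) < (((β:ℝ):ℂ)).re := by simpa using hβ
  have hWne : ((β:ℂ) - Complex.I * u) ≠ 0 := fun h => by
    have := congrArg Complex.re h
    simp at this
    exact hβ.ne' this
  have hβne : ((β:ℝ):ℂ) ≠ 0 := by exact_mod_cast hβ.ne'
  -- pointwise norm bound for e^{iux}-1
  have hb1 : ∀ x : ℝ, 0 ≤ x → ‖Complex.exp (Complex.I * u * x) - 1‖ ≤ |u| * x := by
    intro x hx
    have harg : Complex.I * (u:ℂ) * (x:ℂ) = Complex.I * ((u * x : ℝ) : ℂ) := by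
      push_cast; ring
    rw [harg]
    calc ‖Complex.exp (Complex.I * ((u * x : ℝ) : ℂ)) - 1‖ ≤ |u * x| :=
          cts_norm_exp_I_mul_sub_one_le (u * x)
      _ = |u| * x := by rw [abs_mul, _root_.abs_of_nonneg hx]
  -- target function
  set target : ℝ → ℂ := fun x =>
    (Complex.exp (Complex.I * u * x) - 1) * Complex.exp (-((β:ℂ) * x)) *
      ((x ^ (-1 - α) : ℝ) : ℂ) with htargetdef
  have hfeq : ∀ x ∈ Ioi (0:ℝ),
      (Complex.exp (Complex.I * u * x) - 1) *
        ((Real.exp (-(β * x)) * x ^ (-1 - α) : ℝ) : ℂ) = target x := by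
    intro x _
    simp only [htargetdef]
    push_cast [Complex.ofReal_exp]
    ring
  -- integrability of the statement integrand
  have hnorm_bound : ∀ x ∈ Ioi (0:ℝ),
      ‖(Complex.exp (Complex.I * u * x) - 1) *
          ((Real.exp (-(β * x)) * x ^ (-1 - α) : ℝ) : ℂ)‖
        ≤ |u| * (x ^ (-α) * Real.exp (-(β * x))) := by
    intro x hx
    have hx0 : (0:ℝ) < x := hx
    rw [norm_mul]
    have h2 : ‖((Real.exp (-(β * x)) * x ^ (-1 - α) : ℝ) : ℂ)‖
        = Real.exp (-(β * x)) * x ^ (-1 - α) := by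
      rw [Complex.norm_real, Real.norm_eq_abs, _root_.abs_of_nonneg (by positivity)]
    rw [h2]
    calc ‖Complex.exp (Complex.I * u * x) - 1‖ * (Real.exp (-(β * x)) * x ^ (-1 - α))
        ≤ (|u| * x) * (Real.exp (-(β * x)) * x ^ (-1 - α)) :=
          mul_le_mul_of_nonneg_right (hb1 x hx0.le) (by positivity)
      _ = |u| * (x ^ (-α) * Real.exp (-(β * x))) := by
          rw [show (-α : ℝ) = (-1 - α) + 1 by ring, Real.rpow_add_one hx0.ne']
          ring
  have hInt : IntegrableOn
      (fun x : ℝ =>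
        (Complex.exp (Complex.I * u * x) - 1) *
          ((Real.exp (-(β * x)) * x ^ (-1 - α) : ℝ) : ℂ)) (Ioi 0) volume := by
    apply Integrable.mono'
      ((cts_integrableOn_rpow_mul_exp (p := -α) (by linarith) hβ).const_mul |u|)
    · apply AEStronglyMeasurable.mul
      · exact Continuous.aestronglyMeasurable (by fun_prop)
      · exact (Complex.measurable_ofReal.comp
          (by fun_prop : Measurable fun x : ℝ =>
            Real.exp (-(β * x)) * x ^ (-1 - α))).aestronglyMeasurable
    · rw [ae_restrict_iff' measurableSet_Ioi]
      filter_upwards with x hx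
      exact hnorm_bound x hx
  refine ⟨hInt, ?_⟩
  have hTargetInt : IntegrableOn target (Ioi 0) volume :=
    hInt.congr_fun hfeq measurableSet_Ioi
  -- the auxiliary part of the derivative
  set stuff : ℝ → ℂ := fun x =>
    ((Complex.I * u - β) * Complex.exp (-(((β:ℂ) - Complex.I * u) * x))
        + β * Complex.exp (-((β:ℂ) * x))) *
      (-(((x ^ (-α) : ℝ) : ℂ)) / α) with hstuffdef
  have hint1 := cts_integrableOn_rpow_mul_cexp (p := -α) (by linarith) hzrepos
  have hint2 := cts_integrableOn_rpow_mul_cexp (p := -α) (z := ((β:ℝ):ℂ)) (by linarith) hβrepos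
  set c1 : ℂ := (Complex.I * u - β) * (-(1:ℂ)/α) with hc1
  set c2 : ℂ := (β:ℂ) * (-(1:ℂ)/α) with hc2
  have hsum : ∀ x ∈ Ioi (0:ℝ), stuff x =
      c1 * (((x ^ (-α) : ℝ) : ℂ) * Complex.exp (-(((β:ℂ) - Complex.I * u) * x)))
        + c2 * (((x ^ (-α) : ℝ) : ℂ) * Complex.exp (-((β:ℂ) * x))) := by
    intro x _
    simp only [hstuffdef, hc1, hc2]
    ring
  have hsumInt : IntegrableOn (fun x : ℝ =>
      c1 * (((x ^ (-α) : ℝ) : ℂ) * Complex.exp (-(((β:ℂ) - Complex.I * u) * x)))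
        + c2 * (((x ^ (-α) : ℝ) : ℂ) * Complex.exp (-((β:ℂ) * x)))) (Ioi 0) volume :=
    (hint1.const_mul c1).add (hint2.const_mul c2)
  have hStuffInt : IntegrableOn stuff (Ioi 0) volume :=
    hsumInt.congr_fun (fun x hx => (hsum x hx).symm) measurableSet_Ioi
  -- the primitive G
  set Gfun : ℝ → ℂ := fun x =>
    (Complex.exp (Complex.I * u * x) - 1) * Complex.exp (-((β:ℂ) * x)) *
      (-(((x ^ (-α) : ℝ) : ℂ)) / α) with hGdef
  have hG0 : Gfun 0 = 0 := by
    simp [hGdef]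
  have hGderiv : ∀ x ∈ Ioi (0:ℝ), HasDerivAt Gfun (target x + stuff x) x := by
    intro x hx
    have hx0 : (0:ℝ) < x := hx
    have hA : HasDerivAt (fun y : ℝ => Complex.exp (Complex.I * u * y) - 1)
        (Complex.exp (Complex.I * u * x) * (Complex.I * u)) x := by
      have hc : HasDerivAt (fun w : ℂ => Complex.exp (Complex.I * u * w) - 1)
          (Complex.exp (Complex.I * u * x) * (Complex.I * u)) ((x:ℝ):ℂ) := by
        simpa using (((hasDerivAt_id ((x:ℝ):ℂ)).const_mul (Complex.I * (u:ℂ))).cexp.sub_const 1)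
      exact hc.comp_ofReal
    have hB : HasDerivAt (fun y : ℝ => Complex.exp (-((β:ℂ) * y)))
        (Complex.exp (-((β:ℂ) * x)) * (-β)) x := by
      have hc : HasDerivAt (fun w : ℂ => Complex.exp (-((β:ℂ) * w)))
          (Complex.exp (-((β:ℂ) * x)) * (-β)) ((x:ℝ):ℂ) := by
        simpa using ((((hasDerivAt_id ((x:ℝ):ℂ)).const_mul ((β:ℂ))).neg).cexp)
      exact hc.comp_ofReal
    have hC : HasDerivAt (fun y : ℝ => -(((y ^ (-α) : ℝ) : ℂ)) / α)
        (((x ^ (-1 - α) : ℝ) : ℂ)) x := by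
      have hr := Real.hasDerivAt_rpow_const (p := -α) (x := x) (Or.inl hx0.ne')
      have h1 := (hr.ofReal_comp.neg).div_const ((α : ℝ) : ℂ)
      refine h1.congr_deriv ?_
      symm
      rw [eq_div_iff hαC]
      rw [show (-α - 1 : ℝ) = -1 - α by ring]
      push_cast
      ring
    have hD := (hA.mul hB).mul hC
    refine hD.congr_deriv ?_
    symm
    have hE : Complex.exp (-(((β:ℂ) - Complex.I * u) * x)) =
        Complex.exp (Complex.I * u * x) * Complex.exp (-((β:ℂ) * x)) := by
      rw [← Complex.exp_add]
      congr 1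
      ring
    simp only [htargetdef, hstuffdef, Pi.mul_apply]
    rw [hE]
    ring
  have hcont : ContinuousWithinAt Gfun (Ici (0:ℝ)) 0 := by
    have : Tendsto Gfun (𝓝[Ici (0:ℝ)] 0) (𝓝 0) := by
      apply squeeze_zero_norm' (a := fun x : ℝ => |u| / α * x ^ (1 - α))
      · filter_upwards [self_mem_nhdsWithin] with x hx
        rcases eq_or_lt_of_le (mem_Ici.mp hx) with h0 | hx0
        · rw [← h0, hG0]
          simp [Real.zero_rpow (by linarith : (1:ℝ) - α ≠ 0)]
        · have hGnorm : ‖Gfun x‖ = ‖Complex.exp (Complex.I * u * x) - 1‖ *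
              Real.exp (-(β * x)) * (x ^ (-α) / α) := by
            simp only [hGdef]
            rw [norm_mul, norm_mul, norm_div, norm_neg]
            rw [Complex.norm_exp]
            rw [Complex.norm_real, Real.norm_eq_abs,
              _root_.abs_of_nonneg (Real.rpow_nonneg hx0.le _)]
            rw [Complex.norm_real, Real.norm_eq_abs,
              _root_.abs_of_pos hα0]
            congr 2
            simp
          rw [hGnorm]
          have e2le : Real.exp (-(β * x)) ≤ 1 := by
            rw [Real.exp_le_one_iff]
            nlinarith
          calc ‖Complex.exp (Complex.I * u * x) - 1‖ * Real.exp (-(β * x)) * (x ^ (-α) / α)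
              ≤ (|u| * x) * 1 * (x ^ (-α) / α) := by
                apply mul_le_mul _ le_rfl (by positivity) (by positivity)
                exact mul_le_mul (hb1 x hx0.le) e2le (Real.exp_nonneg _) (by positivity)
            _ = |u| / α * x ^ (1 - α) := by
                rw [show (1 - α : ℝ) = -α + 1 by ring, Real.rpow_add_one hx0.ne']
                field_simp
      · have h1 : Tendsto (fun x : ℝ => x ^ (1 - α)) (𝓝 0) (𝓝 (0:ℝ)) := by
          have := (Real.continuousAt_rpow_const 0 (1 - α) (Or.inr (by linarith))).tendsto
          simpa [Real.zero_rpow (by linarith : (1:ℝ) - α ≠ 0)] using this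
        have h2 := h1.const_mul (|u| / α)
        rw [mul_zero] at h2
        exact h2.mono_left nhdsWithin_le_nhds
    rw [ContinuousWithinAt, hG0]
    exact this
  have htop : Tendsto Gfun atTop (𝓝 0) := by
    apply squeeze_zero_norm' (a := fun x : ℝ => 2 / α * (x ^ (-α) * Real.exp (-(β * x))))
    · filter_upwards [eventually_gt_atTop (0:ℝ)] with x hx0
      have hGnorm : ‖Gfun x‖ = ‖Complex.exp (Complex.I * u * x) - 1‖ *
          Real.exp (-(β * x)) * (x ^ (-α) / α) := by
        simp only [hGdef]
        rw [norm_mul, norm_mul, norm_div, norm_neg]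
        rw [Complex.norm_exp]
        rw [Complex.norm_real, Real.norm_eq_abs,
          _root_.abs_of_nonneg (Real.rpow_nonneg hx0.le _)]
        rw [Complex.norm_real, Real.norm_eq_abs,
          _root_.abs_of_pos hα0]
        congr 2
        simp
      rw [hGnorm]
      have hle2 : ‖Complex.exp (Complex.I * u * x) - 1‖ ≤ 2 := by
        calc ‖Complex.exp (Complex.I * u * x) - 1‖
            ≤ ‖Complex.exp (Complex.I * u * x)‖ + ‖(1:ℂ)‖ := norm_sub_le _ _
          _ = 2 := by
              rw [Complex.norm_exp]
              norm_num
      calc ‖Complex.exp (Complex.I * u * x) - 1‖ * Real.exp (-(β * x)) * (x ^ (-α) / α)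
          ≤ 2 * Real.exp (-(β * x)) * (x ^ (-α) / α) := by
            apply mul_le_mul_of_nonneg_right _ (by positivity)
            exact mul_le_mul_of_nonneg_right hle2 (Real.exp_nonneg _)
        _ = 2 / α * (x ^ (-α) * Real.exp (-(β * x))) := by ring
    · have := (tendsto_rpow_mul_exp_neg_mul_atTop_nhds_zero (-α) β hβ).const_mul (2 / α)
      rw [mul_zero] at this
      simpa [neg_mul] using this
  have key := integral_Ioi_of_hasDerivAt_of_tendsto hcont hGderiv
    (hTargetInt.add hStuffInt) htop
  rw [hG0, sub_zero] at key
  rw [integral_add hTargetInt hStuffInt] at key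
  -- gamma integrals
  have hgamma1 := cts_gamma_integral hβ (s := 1 - α) (by linarith) u
  rw [show (1 - α - 1 : ℝ) = -α by ring] at hgamma1
  have hgamma2 := cts_gamma_integral hβ (s := 1 - α) (by linarith) 0
  rw [show (1 - α - 1 : ℝ) = -α by ring] at hgamma2
  simp only [Complex.ofReal_zero, mul_zero, sub_zero] at hgamma2
  have hstuffval : ∫ x in Ioi (0:ℝ), stuff x =
      c1 * ((Real.Gamma (1 - α) : ℂ) * ((β:ℂ) - Complex.I * u) ^ (-(((1 - α : ℝ)):ℂ)))
        + c2 * ((Real.Gamma (1 - α) : ℂ) * (((β:ℝ):ℂ)) ^ (-(((1 - α : ℝ)):ℂ))) := by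
    rw [setIntegral_congr_fun measurableSet_Ioi hsum,
      integral_add (hint1.const_mul c1) (hint2.const_mul c2),
      integral_const_mul, integral_const_mul, hgamma1, hgamma2]
  -- conclude
  rw [setIntegral_congr_fun measurableSet_Ioi hfeq]
  have hTval : ∫ x in Ioi (0:ℝ), target x = -(∫ x in Ioi (0:ℝ), stuff x) := by
    linear_combination key
  rw [hTval, hstuffval]
  -- power identities
  have hWpow : ((β:ℂ) - Complex.I * u) ^ ((α:ℝ):ℂ) =
      ((β:ℂ) - Complex.I * u) * ((β:ℂ) - Complex.I * u) ^ (-(((1 - α : ℝ)):ℂ)) := by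
    rw [show ((α:ℝ):ℂ) = (1:ℂ) + -(((1 - α : ℝ)):ℂ) by push_cast; ring,
      Complex.cpow_add _ _ hWne, Complex.cpow_one]
  have hβpow : (((β:ℝ):ℂ)) ^ ((α:ℝ):ℂ) =
      (((β:ℝ):ℂ)) * (((β:ℝ):ℂ)) ^ (-(((1 - α : ℝ)):ℂ)) := by
    rw [show ((α:ℝ):ℂ) = (1:ℂ) + -(((1 - α : ℝ)):ℂ) by push_cast; ring,
      Complex.cpow_add _ _ hβne, Complex.cpow_one]
  have hgm : ((Real.Gamma (1 - α) : ℝ) : ℂ) = -(α:ℂ) * ((Real.Gamma (-α) : ℝ) : ℂ) := by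
    have : Real.Gamma (1 - α) = -α * Real.Gamma (-α) := by
      rw [show (1 - α : ℝ) = -α + 1 by ring]
      exact Real.Gamma_add_one (neg_ne_zero.mpr hα0.ne')
    rw [this]
    push_cast
    ring
  rw [hWpow, hβpow, hgm, hc1, hc2]
  field_simp
  ring
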